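/- arXiv:1201.5010 — 5 statements merged into one kernel-verified Lean document; each statement's English description precedes it below -/
import Mathlib

section
/- Let G be a finite simple connected graph with d vertices and m edges in which every vertex has degree at most 3 and at least one vertex has degree less than 3. Assume that the graph distance between any two vertices of degree 3 is at least 3 and that G contains no 3-cycles. If d ≥ 2, then d ≥ 2g + 2, where g = m − d + 1. -/
/-
Let `t` be the number of trivalent vertices. Counting degrees gives `2m ≤ 2d + t`, that is
`2g ≤ t + 2`. Trivalent vertices are at distance at least 3, so their closed neighbourhoods
(of size 4) are pairwise disjoint and `4t ≤ d`; this settles the case `t ≥ 1`. When `t = 0` the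
bound can only fail for `g = 1`; then `m = d` forces every degree to be exactly 2, and since `G`
has no triangles the neighbourhoods of the two ends of an edge are disjoint, so `d ≥ 4`.
-/

open Finset

namespace SimpleGraph

variable {V : Type*} [Fintype V]

section

variable {G : SimpleGraph V} [DecidableRel G.Adj]

lemma two_mul_card_edgeFinset_le_of_degree_le_three (hdeg : ∀ v, G.degree v ≤ 3) :
    2 * #G.edgeFinset ≤ 2 * Fintype.card V + #{v | G.degree v = 3} := by
  rw [← sum_degrees_eq_twice_card_edges, card_filter, ← card_univ, mul_comm, ← smul_eq_mul,
    ← sum_const, ← sum_add_distrib]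
  refine sum_le_sum fun v _ => ?_
  have := hdeg v
  split_ifs <;> omega

lemma isRegularOfDegree_two_of_degree_le_two (hdeg : ∀ v, G.degree v ≤ 2)
    (hcard : Fintype.card V ≤ #G.edgeFinset) : G.IsRegularOfDegree 2 := by
  have hsum : ∑ v, G.degree v = ∑ _v : V, 2 := by
    refine le_antisymm (sum_le_sum fun v _ => hdeg v) ?_
    rw [sum_degrees_eq_twice_card_edges, sum_const, card_univ, smul_eq_mul]
    omega
  exact fun v => (sum_eq_sum_iff_of_le fun v _ => hdeg v).mp hsum v (mem_univ v)

end

variable [DecidableEq V]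

def closedNeighborFinset (G : SimpleGraph V) [DecidableRel G.Adj] (v : V) : Finset V :=
  insert v (G.neighborFinset v)

variable {G : SimpleGraph V} [DecidableRel G.Adj]

lemma mem_closedNeighborFinset {v w : V} :
    w ∈ G.closedNeighborFinset v ↔ w = v ∨ G.Adj v w := by
  simp [closedNeighborFinset]

lemma card_closedNeighborFinset (v : V) : #(G.closedNeighborFinset v) = G.degree v + 1 := by
  rw [closedNeighborFinset, card_insert_of_notMem (G.notMem_neighborFinset_self v),
    card_neighborFinset_eq_degree]

lemma dist_le_two_of_mem_closedNeighborFinset {u v w : V} (hu : w ∈ G.closedNeighborFinset u)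
    (hv : w ∈ G.closedNeighborFinset v) : G.dist u v ≤ 2 := by
  have near : ∀ {x y : V}, y ∈ G.closedNeighborFinset x → G.Reachable x y ∧ G.dist x y ≤ 1 := by
    intro x y h
    rcases mem_closedNeighborFinset.mp h with rfl | hxy
    · simp
    · exact ⟨hxy.reachable, (dist_eq_one_iff_adj.mpr hxy).le⟩
  obtain ⟨huw, huw_le⟩ := near hu
  have hvw_le := (near hv).2
  rw [dist_comm] at hvw_le
  have := huw.dist_triangle_left v
  omega

lemma disjoint_closedNeighborFinset_of_three_le_dist {u v : V} (h : 3 ≤ G.dist u v) :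
    Disjoint (G.closedNeighborFinset u) (G.closedNeighborFinset v) :=
  Finset.disjoint_left.mpr fun _ hu hv => by
    have := dist_le_two_of_mem_closedNeighborFinset hu hv
    omega

lemma sum_degree_add_one_le_card_of_pairwise_three_le_dist {S : Finset V}
    (hS : (S : Set V).Pairwise fun u v => 3 ≤ G.dist u v) :
    ∑ v ∈ S, (G.degree v + 1) ≤ Fintype.card V :=
  calc ∑ v ∈ S, (G.degree v + 1) = #(S.biUnion G.closedNeighborFinset) := by
        rw [Finset.card_biUnion (t := G.closedNeighborFinset)
          (hS.mono' fun _ _ => disjoint_closedNeighborFinset_of_three_le_dist)]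
        exact sum_congr rfl fun v _ => (card_closedNeighborFinset v).symm
    _ ≤ Fintype.card V := card_le_univ _

lemma degree_add_degree_le_card_of_cliqueFree_three (htri : G.CliqueFree 3) {u v : V}
    (h : G.Adj u v) : G.degree u + G.degree v ≤ Fintype.card V := by
  have hdisj : Disjoint (G.neighborFinset u) (G.neighborFinset v) :=
    Finset.disjoint_left.mpr fun w hu hv => htri {u, v, w} <| is3Clique_triple_iff.mpr
      ⟨h, by simpa using hu, by simpa using hv⟩
  rw [← card_neighborFinset_eq_degree, ← card_neighborFinset_eq_degree,
    ← card_union_of_disjoint hdisj]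
  exact card_le_univ _

lemma four_le_card_of_isRegularOfDegree_two [Nonempty V] (htri : G.CliqueFree 3)
    (hreg : G.IsRegularOfDegree 2) : 4 ≤ Fintype.card V := by
  obtain ⟨v⟩ := ‹Nonempty V›
  obtain ⟨u, hu⟩ : (G.neighborFinset v).Nonempty := by
    rw [← card_pos, card_neighborFinset_eq_degree, hreg v]
    norm_num
  have := degree_add_degree_le_card_of_cliqueFree_three htri (by simpa using hu)
  rwa [hreg v, hreg u] at this

end SimpleGraph

open SimpleGraph

theorem graphCurve_degree_ge_two_genus_add_two_general
    {V : Type} [Fintype V] [DecidableEq V] (G : SimpleGraph V) [DecidableRel G.Adj]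
    (hdeg : ∀ v : V, G.degree v ≤ 3)
    (hdist : ∀ u v : V, G.degree u = 3 → G.degree v = 3 → u ≠ v → 3 ≤ G.dist u v)
    (htri : G.CliqueFree 3)
    (d m g : ℕ)
    (hd : Fintype.card V = d)
    (hm : G.edgeFinset.card = m)
    (hg : m + 1 = d + g)
    (hd2 : 2 ≤ d) :
    2 * g + 2 ≤ d := by
  subst hd hm
  have hcount := two_mul_card_edgeFinset_le_of_degree_le_three hdeg
  set T : Finset V := {v | G.degree v = 3}
  have hpack : 4 * #T ≤ Fintype.card V := by
    have := sum_degree_add_one_le_card_of_pairwise_three_le_dist (G := G) (S := T)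
      fun u hu v hv huv => hdist u v (by simpa [T] using hu) (by simpa [T] using hv) huv
    rwa [sum_congr rfl fun v hv => by rw [(mem_filter.mp hv).2], sum_const, smul_eq_mul,
      mul_comm] at this
  have hregular : #T = 0 → g = 1 → 4 ≤ Fintype.card V := by
    intro hT0 hg1
    have : Nonempty V := Fintype.card_pos_iff.mp (by omega)
    refine four_le_card_of_isRegularOfDegree_two htri
      (isRegularOfDegree_two_of_degree_le_two (fun v => ?_) (by omega))
    have hv : G.degree v ≠ 3 := filter_eq_empty_iff.mp (card_eq_zero.mp hT0) (mem_univ v)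
    have := hdeg v
    omega
  omega

/-- Let `G` be a finite simple connected graph with `d` vertices and `m`
edges in which every vertex has degree at most 3 and at least one vertex has degree less
than 3 (i.e. `G` is strictly subtrivalent).  Assume that the graph distance between any two
distinct vertices of degree 3 is at least 3 and that `G` contains no 3-cycles.  If `d ≥ 2`,
then `d ≥ 2g + 2`, where `g = m − d + 1` is the genus (cycle rank) of `G`. -/
theorem graphCurve_degree_ge_two_genus_add_two
    {V : Type} [Fintype V] [DecidableEq V] (G : SimpleGraph V) [DecidableRel G.Adj]
    (hconn : G.Connected)
    (hdeg : ∀ v : V, G.degree v ≤ 3)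
    (hsub : ∃ v : V, G.degree v < 3)
    (hdist : ∀ u v : V, G.degree u = 3 → G.degree v = 3 → u ≠ v → 3 ≤ G.dist u v)
    (htri : G.CliqueFree 3)
    (d m g : ℕ)
    (hd : Fintype.card V = d)
    (hm : G.edgeFinset.card = m)
    (hg : m + 1 = d + g)
    (hd2 : 2 ≤ d) :
    2 * g + 2 ≤ d :=
  graphCurve_degree_ge_two_genus_add_two_general G hdeg hdist htri d m g hd hm hg hd2
end

section
/- Let G be a finite simple connected graph with d ≥ 2 vertices and m edges in which every vertex has degree at most 3 and some vertex has degree less than 3, the graph distance between any two vertices of degree 3 is at least 3, and G contains no 3-cycles; set g = m − d + 1. Then there exists a family (W_v)_{v ∈ V(G)} of 2-dimensional linear subspaces of k^{d−g+1}, indexed by the vertices of G, such that: (i) the subspaces W_v are pairwise distinct and together span k^{d−g+1}; (ii) for distinct vertices u and v, W_u ∩ W_v is nonzero if and only if u and v are adjacent in G, and in that case W_u ∩ W_v is 1-dimensional; and (iii) for every vertex v, the vanishing ideal of W_v in k[x_0, …, x_{d−g}] is generated by a set of linear polynomials, each of which is either a single variable x_i or a binomial x_j − x_k. -/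
/-!
Coordinates are indexed by the edges of `G` and its leaves, except that at each trivalent vertex
`w` the edge to a chosen neighbour `t w` is dropped; by the degree-sum formula there are
`2d - m = n + 1` of them. An edge gets the 0/1 vector of its own coordinate or, if it is the
dropped edge at `w`, the sum of the vectors of the two other edges at `w`. The line of `v`,
spanned by the vectors of its edges (and by its own coordinate if `v` is a leaf), is spanned by
the indicators of two disjoint blocks of coordinates, and such a plane is cut out by variables
and binomials. Because trivalent vertices are at distance at least 3 and there are no triangles,
for non-adjacent `u`, `v` one of the two lines has both blocks sticking out of the coordinates
used by the other, so the lines are skew; for an edge `uv` one line has a block disjoint from the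
other line, which leaves only the point of `uv` in the intersection.
-/

open MvPolynomial

def vanishingIdeal (k : Type*) [CommRing k] (N : ℕ) (Z : Set (Fin N → k)) :
    Ideal (MvPolynomial (Fin N) k) where
  carrier := {p | ∀ x ∈ Z, MvPolynomial.eval x p = 0}
  zero_mem' := fun x _ => map_zero _
  add_mem' := fun {a b} ha hb x hx => by rw [map_add, ha x hx, hb x hx, add_zero]
  smul_mem' := fun c p hp x hx => by rw [smul_eq_mul, map_mul, hp x hx, mul_zero]

section BlockSpan

variable {k ι : Type*} [Field k]

variable (k) in
def blockSpan (𝒜 : Set (Set ι)) : Submodule k (ι → k) :=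
  Submodule.span k ((fun S => S.indicator 1) '' 𝒜)

def IsBlockPair (𝒜 : Set (Set ι)) : Prop :=
  ∃ A B, A.Nonempty ∧ B.Nonempty ∧ Disjoint A B ∧ 𝒜 = {A, B}

/-- The intersection of the lines of `𝒜` and `ℬ` is then spanned by the indicator of `S`. -/
def Meets (𝒜 ℬ : Set (Set ι)) : Prop :=
  ∃ S ∈ 𝒜, (S ∈ ℬ ∨ S = ⋃₀ ℬ) ∧ ∀ T ∈ 𝒜, T ≠ S → Disjoint T (⋃₀ ℬ)

variable {A B : Set ι} {𝒜 ℬ : Set (Set ι)} {x : ι → k} {i : ι}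

theorem mem_blockSpan_pair :
    x ∈ blockSpan k {A, B} ↔ ∃ a b : k, a • A.indicator 1 + b • B.indicator 1 = x := by
  rw [blockSpan, Set.image_pair, Submodule.mem_span_pair]

theorem apply_eq_zero_of_mem_blockSpan (hx : x ∈ blockSpan k 𝒜) (hi : i ∉ ⋃₀ 𝒜) :
    x i = 0 := by
  induction hx using Submodule.span_induction with
  | mem y hy =>
    obtain ⟨S, hS, rfl⟩ := hy
    exact Set.indicator_of_notMem (fun hiS => hi ⟨S, hS, hiS⟩) _
  | zero => rfl
  | add _ _ _ _ hy hz => simp [hy, hz]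
  | smul a _ _ hy => simp [hy]

theorem smul_indicator_add_apply_of_mem_left (hAB : Disjoint A B) (hi : i ∈ A) (a b : k) :
    (a • A.indicator 1 + b • B.indicator 1 : ι → k) i = a := by
  simp [hi, Set.disjoint_left.mp hAB hi]

theorem smul_indicator_add_apply_of_mem_right (hAB : Disjoint A B) (hi : i ∈ B) (a b : k) :
    (a • A.indicator 1 + b • B.indicator 1 : ι → k) i = b := by
  simp [hi, Set.disjoint_right.mp hAB hi]

theorem Set.Nonempty.indicator_one_ne_zero (hA : A.Nonempty) : (A.indicator 1 : ι → k) ≠ 0 := by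
  obtain ⟨i, hi⟩ := hA
  exact fun h => one_ne_zero (α := k) (by simpa [hi] using congrFun h i)

theorem indicator_mem_blockSpan (hℬ : IsBlockPair ℬ) (hA : A ∈ ℬ ∨ A = ⋃₀ ℬ) :
    A.indicator 1 ∈ blockSpan k ℬ := by
  rcases hA with hA | rfl
  · exact Submodule.subset_span ⟨A, hA, rfl⟩
  · obtain ⟨C, D, -, -, hCD, rfl⟩ := hℬ
    rw [Set.sUnion_pair, Set.indicator_union_of_disjoint hCD]
    exact add_mem (Submodule.subset_span ⟨C, by simp, rfl⟩)
      (Submodule.subset_span ⟨D, by simp, rfl⟩)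

theorem IsBlockPair.finrank_blockSpan (h : IsBlockPair 𝒜) :
    Module.finrank k (blockSpan k 𝒜) = 2 := by
  obtain ⟨A, B, ⟨a, ha⟩, ⟨b, hb⟩, hAB, rfl⟩ := h
  have hind : LinearIndependent k ![(A.indicator 1 : ι → k), B.indicator 1] := by
    refine LinearIndependent.pair_iff.mpr fun c d hcd => ⟨?_, ?_⟩
    · simpa [smul_indicator_add_apply_of_mem_left hAB ha] using congrFun hcd a
    · simpa [smul_indicator_add_apply_of_mem_right hAB hb] using congrFun hcd b
  rw [blockSpan, Set.image_pair, ← Matrix.range_cons_cons_empty _ _ ![],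
    finrank_span_eq_card hind, Fintype.card_fin]

theorem IsBlockPair.blockSpan_inf_eq_bot (h : IsBlockPair 𝒜) (hesc : ∀ S ∈ 𝒜, ¬ S ⊆ ⋃₀ ℬ) :
    blockSpan k 𝒜 ⊓ blockSpan k ℬ = ⊥ := by
  obtain ⟨A, B, -, -, hAB, rfl⟩ := h
  refine eq_bot_iff.mpr fun x hx => ?_
  obtain ⟨hx𝒜, hxℬ⟩ := Submodule.mem_inf.mp hx
  obtain ⟨a, b, rfl⟩ := mem_blockSpan_pair.mp hx𝒜
  obtain ⟨i, hiA, hi⟩ := Set.not_subset.mp (hesc A (by simp))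
  obtain ⟨j, hjB, hj⟩ := Set.not_subset.mp (hesc B (by simp))
  have ha := apply_eq_zero_of_mem_blockSpan hxℬ hi
  have hb := apply_eq_zero_of_mem_blockSpan hxℬ hj
  rw [smul_indicator_add_apply_of_mem_left hAB hiA] at ha
  rw [smul_indicator_add_apply_of_mem_right hAB hjB] at hb
  simp [ha, hb]

theorem blockSpan_pair_inf_eq_span (hAB : Disjoint A B) (hB : B.Nonempty) (hℬ : IsBlockPair ℬ)
    (hAℬ : A ∈ ℬ ∨ A = ⋃₀ ℬ) (hBℬ : Disjoint B (⋃₀ ℬ)) :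
    blockSpan k {A, B} ⊓ blockSpan k ℬ = Submodule.span k {A.indicator 1} := by
  refine le_antisymm (fun x hx => ?_) (Submodule.span_le.mpr <| Set.singleton_subset_iff.mpr
    ⟨Submodule.subset_span ⟨A, by simp, rfl⟩, indicator_mem_blockSpan hℬ hAℬ⟩)
  obtain ⟨hx𝒜, hxℬ⟩ := Submodule.mem_inf.mp hx
  obtain ⟨a, b, rfl⟩ := mem_blockSpan_pair.mp hx𝒜
  obtain ⟨j, hj⟩ := hB
  have hb := apply_eq_zero_of_mem_blockSpan hxℬ (Set.disjoint_left.mp hBℬ hj)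
  rw [smul_indicator_add_apply_of_mem_right hAB hj] at hb
  simpa [hb] using Submodule.smul_mem _ a (Submodule.mem_span_singleton_self _)

theorem IsBlockPair.finrank_blockSpan_inf (h𝒜 : IsBlockPair 𝒜) (hℬ : IsBlockPair ℬ)
    (hmeet : Meets 𝒜 ℬ) : Module.finrank k ↥(blockSpan k 𝒜 ⊓ blockSpan k ℬ) = 1 := by
  obtain ⟨A, B, hA, hB, hAB, rfl⟩ := h𝒜
  obtain ⟨S, hS, hSℬ, hdisj⟩ := hmeet
  have hAB' : A ≠ B := by
    rintro rfl
    exact hA.ne_empty (disjoint_self.mp hAB)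
  rcases hS with rfl | rfl
  · rw [blockSpan_pair_inf_eq_span hAB hB hℬ hSℬ (hdisj B (by simp) hAB'.symm),
      finrank_span_singleton hA.indicator_one_ne_zero]
  · rw [Set.pair_comm, blockSpan_pair_inf_eq_span hAB.symm hA hℬ hSℬ (hdisj A (by simp) hAB'),
      finrank_span_singleton hB.indicator_one_ne_zero]

theorem iSup_blockSpan_eq_top {V : Type*} [Finite ι] (blocks : V → Set (Set ι))
    (h : ∀ i, ∃ v, {i} ∈ blocks v) : ⨆ v, blockSpan k (blocks v) = ⊤ := by
  classical
  have := Fintype.ofFinite ι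
  refine eq_top_iff.mpr fun x _ => ?_
  rw [pi_eq_sum_univ x]
  refine Submodule.sum_mem _ fun i _ => Submodule.smul_mem _ _ ?_
  obtain ⟨v, hv⟩ := h i
  refine Submodule.mem_iSup_of_mem v (Submodule.subset_span ⟨{i}, hv, funext fun j => ?_⟩)
  by_cases hij : i = j <;> simp [hij, Ne.symm]

end BlockSpan

section VanishingIdeal

variable {k : Type*} [Field k] {N : ℕ}

theorem vanishingIdeal_le_of_X_sub_mem [Infinite k] {Z : Set (Fin N → k)}
    {I : Ideal (MvPolynomial (Fin N) k)} (g : Fin N → MvPolynomial (Fin N) k)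
    (hg : ∀ i, X i - g i ∈ I) (hZ : ∀ x, (fun i => eval x (g i)) ∈ Z) :
    vanishingIdeal k N Z ≤ I := by
  intro p hp
  have hmk : (Ideal.Quotient.mkₐ k I).comp (bind₁ g) = Ideal.Quotient.mkₐ k I :=
    algHom_ext fun i => by simpa using (Ideal.Quotient.eq.mpr (hg i)).symm
  have hzero : bind₁ g p = 0 := MvPolynomial.funext fun x => by
    change eval₂Hom (RingHom.id k) x (bind₁ g p) = eval x 0
    rw [eval₂Hom_bind₁, map_zero]
    exact hp _ (hZ x)
  rw [← Ideal.Quotient.eq_zero_iff_mem, ← Ideal.Quotient.mkₐ_eq_mk k, ← hmk,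
    AlgHom.comp_apply, hzero, map_zero]

variable (k) in
def blockPairGenerators (A B : Set (Fin N)) (a b : Fin N) : Set (MvPolynomial (Fin N) k) :=
  {p | (∃ i ∉ A ∪ B, p = X i) ∨ (∃ j ∈ A, j ≠ a ∧ p = X j - X a) ∨
    (∃ j ∈ B, j ≠ b ∧ p = X j - X b)}

variable {A B : Set (Fin N)} {a b : Fin N}

theorem span_blockPairGenerators_le (hAB : Disjoint A B) (ha : a ∈ A) (hb : b ∈ B) :
    Ideal.span (blockPairGenerators k A B a b) ≤
      vanishingIdeal k N (blockSpan k {A, B} : Set (Fin N → k)) := by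
  refine Ideal.span_le.mpr fun p hp x hx => ?_
  obtain ⟨c, d, rfl⟩ := mem_blockSpan_pair.mp hx
  rcases hp with ⟨i, hi, rfl⟩ | ⟨j, hj, -, rfl⟩ | ⟨j, hj, -, rfl⟩
  · simp only [Set.mem_union, not_or] at hi
    simp [hi.1, hi.2]
  · simp [smul_indicator_add_apply_of_mem_left hAB hj,
      smul_indicator_add_apply_of_mem_left hAB ha]
  · simp [smul_indicator_add_apply_of_mem_right hAB hj,
      smul_indicator_add_apply_of_mem_right hAB hb]

/-- Substituting `X a` for the variables of `A`, `X b` for those of `B` and `0` for the others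
retracts `k[X]` onto polynomials in two variables, and these vanish on the plane only if zero. -/
theorem vanishingIdeal_le_span_blockPairGenerators [Infinite k] (hAB : Disjoint A B) (ha : a ∈ A)
    (hb : b ∈ B) :
    vanishingIdeal k N (blockSpan k {A, B} : Set (Fin N → k)) ≤
      Ideal.span (blockPairGenerators k A B a b) := by
  classical
  refine vanishingIdeal_le_of_X_sub_mem
    (fun i => if i ∈ A then X a else if i ∈ B then X b else 0) (fun i => ?_) (fun x => ?_)
  · have hgen := Ideal.subset_span (s := blockPairGenerators k A B a b)
    by_cases hiA : i ∈ A
    · by_cases hia : i = a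
      · simp [hia, ha]
      · simpa [hiA] using hgen (Or.inr (Or.inl ⟨i, hiA, hia, rfl⟩))
    by_cases hiB : i ∈ B
    · by_cases hib : i = b
      · simp [hib, hb, Set.disjoint_right.mp hAB hb]
      · simpa [hiA, hiB] using hgen (Or.inr (Or.inr ⟨i, hiB, hib, rfl⟩))
    · simpa [hiA, hiB] using hgen (Or.inl ⟨i, by simp [hiA, hiB], rfl⟩)
  · refine mem_blockSpan_pair.mpr ⟨x a, x b, funext fun i => ?_⟩
    by_cases hiA : i ∈ A
    · simp [smul_indicator_add_apply_of_mem_left hAB hiA, hiA]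
    by_cases hiB : i ∈ B
    · simp [smul_indicator_add_apply_of_mem_right hAB hiB, hiA, hiB]
    · simp [hiA, hiB]

theorem IsBlockPair.exists_span_eq_vanishingIdeal [Infinite k] {𝒜 : Set (Set (Fin N))}
    (h : IsBlockPair 𝒜) :
    ∃ S : Set (MvPolynomial (Fin N) k),
      (∀ p ∈ S, (∃ i, p = X i) ∨ ∃ j l, j ≠ l ∧ p = X j - X l) ∧
      Ideal.span S = vanishingIdeal k N (blockSpan k 𝒜 : Set (Fin N → k)) := by
  obtain ⟨A, B, ⟨a, ha⟩, ⟨b, hb⟩, hAB, rfl⟩ := h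
  refine ⟨blockPairGenerators k A B a b, ?_, le_antisymm (span_blockPairGenerators_le hAB ha hb)
    (vanishingIdeal_le_span_blockPairGenerators hAB ha hb)⟩
  rintro p (⟨i, -, rfl⟩ | ⟨j, -, hj, rfl⟩ | ⟨j, -, hj, rfl⟩)
  exacts [Or.inl ⟨i, rfl⟩, Or.inr ⟨j, a, hj, rfl⟩, Or.inr ⟨j, b, hj, rfl⟩]

end VanishingIdeal

section BlockConfiguration

variable {V ι : Type*}

theorem sUnion_image_preimage {ι' : Type*} (f : ι' → ι) (𝒜 : Set (Set ι)) :
    ⋃₀ ((f ⁻¹' ·) '' 𝒜) = f ⁻¹' ⋃₀ 𝒜 := by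
  rw [Set.sUnion_image, Set.preimage_sUnion]

theorem Meets.preimage {ι' : Type*} {𝒜 ℬ : Set (Set ι)} (h : Meets 𝒜 ℬ) (f : ι' → ι) :
    Meets ((f ⁻¹' ·) '' 𝒜) ((f ⁻¹' ·) '' ℬ) := by
  obtain ⟨S, hS, hSℬ, hdisj⟩ := h
  refine ⟨f ⁻¹' S, Set.mem_image_of_mem _ hS, ?_, ?_⟩
  · rw [sUnion_image_preimage]
    exact hSℬ.imp (Set.mem_image_of_mem _) (congrArg _)
  · rintro _ ⟨T, hT, rfl⟩ hne
    rw [sUnion_image_preimage]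
    exact (hdisj T hT fun hTS => hne (hTS ▸ rfl)).preimage f

structure IsBlockConfiguration (G : SimpleGraph V) (blocks : V → Set (Set ι)) : Prop where
  isBlockPair : ∀ v, IsBlockPair (blocks v)
  escape : ∀ u v, u ≠ v → ¬ G.Adj u v →
    (∀ S ∈ blocks u, ¬ S ⊆ ⋃₀ blocks v) ∨ (∀ S ∈ blocks v, ¬ S ⊆ ⋃₀ blocks u)
  meets : ∀ u v, G.Adj u v → Meets (blocks u) (blocks v) ∨ Meets (blocks v) (blocks u)
  singleton_mem : ∀ v, ∀ i ∈ ⋃₀ blocks v, ∃ w, {i} ∈ blocks w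

namespace IsBlockConfiguration

variable {G : SimpleGraph V} {blocks : V → Set (Set ι)} (h : IsBlockConfiguration G blocks)
  {k : Type*} [Field k] {u v : V}
include h

theorem blockSpan_inf_eq_bot (huv : u ≠ v) (hadj : ¬ G.Adj u v) :
    blockSpan k (blocks u) ⊓ blockSpan k (blocks v) = ⊥ := by
  rcases h.escape u v huv hadj with hesc | hesc
  · exact (h.isBlockPair u).blockSpan_inf_eq_bot hesc
  · rw [inf_comm]
    exact (h.isBlockPair v).blockSpan_inf_eq_bot hesc

theorem finrank_blockSpan_inf (hadj : G.Adj u v) :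
    Module.finrank k ↥(blockSpan k (blocks u) ⊓ blockSpan k (blocks v)) = 1 := by
  rcases h.meets u v hadj with hmeet | hmeet
  · exact (h.isBlockPair u).finrank_blockSpan_inf (h.isBlockPair v) hmeet
  · rw [inf_comm]
    exact (h.isBlockPair v).finrank_blockSpan_inf (h.isBlockPair u) hmeet

theorem blockSpan_inf_ne_bot_iff (huv : u ≠ v) :
    blockSpan k (blocks u) ⊓ blockSpan k (blocks v) ≠ ⊥ ↔ G.Adj u v := by
  refine ⟨fun hne => by_contra fun hadj => hne (h.blockSpan_inf_eq_bot huv hadj),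
    fun hadj hbot => ?_⟩
  have := h.finrank_blockSpan_inf (k := k) hadj
  rw [hbot, finrank_bot] at this
  exact zero_ne_one this

theorem injective_blockSpan : Function.Injective fun v => blockSpan k (blocks v) := by
  intro u v huv
  by_contra hne
  have hinf : blockSpan k (blocks u) ⊓ blockSpan k (blocks v) = blockSpan k (blocks u) := by
    simp only at huv
    rw [huv, inf_idem]
  have htwo := (h.isBlockPair u).finrank_blockSpan (k := k)
  by_cases hadj : G.Adj u v
  · have hone := h.finrank_blockSpan_inf (k := k) hadj
    rw [hinf] at hone
    omega
  · rw [← hinf, h.blockSpan_inf_eq_bot hne hadj, finrank_bot] at htwo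
    omega

omit h in
theorem preimage {ι' : Type*} (h : IsBlockConfiguration G blocks) {f : ι' → ι}
    (hf : Function.Injective f) (hrange : ∀ v, ⋃₀ blocks v ⊆ Set.range f) :
    IsBlockConfiguration G fun v => (f ⁻¹' ·) '' blocks v where
  isBlockPair v := by
    obtain ⟨A, B, hA, hB, hAB, hv⟩ := h.isBlockPair v
    have hsub : ∀ S ∈ blocks v, S ⊆ Set.range f := fun S hS =>
      (Set.subset_sUnion_of_mem hS).trans (hrange v)
    exact ⟨_, _, hA.preimage' (hsub A (by simp [hv])), hB.preimage' (hsub B (by simp [hv])),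
      hAB.preimage f, by rw [hv, Set.image_pair]⟩
  escape u v huv hadj := by
    have hsub : ∀ w, ∀ S ∈ blocks w, S ⊆ Set.range f := fun w S hS =>
      (Set.subset_sUnion_of_mem hS).trans (hrange w)
    simp only [sUnion_image_preimage, Set.forall_mem_image]
    refine (h.escape u v huv hadj).imp (fun hesc S hS => ?_) (fun hesc S hS => ?_) <;>
      rw [Set.preimage_subset_preimage_iff (hsub _ S hS)] <;> exact hesc S hS
  meets u v hadj := (h.meets u v hadj).imp (·.preimage f) (·.preimage f)
  singleton_mem := by
    rintro v i ⟨_, ⟨S, hS, rfl⟩, hi⟩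
    obtain ⟨w, hw⟩ := h.singleton_mem v (f i) ⟨S, hS, hi⟩
    exact ⟨w, {f i}, hw, by ext; simp [hf.eq_iff]⟩

omit h in
theorem exists_fin_of_natCard_eq [Finite ι] {N : ℕ} (h : IsBlockConfiguration G blocks)
    (hcard : Nat.card (⋃ v, ⋃₀ blocks v) = N) :
    ∃ blocks' : V → Set (Set (Fin N)),
      IsBlockConfiguration G blocks' ∧ ∀ i, ∃ v, {i} ∈ blocks' v := by
  let e := (Finite.equivFin (⋃ v, ⋃₀ blocks v)).trans (finCongr hcard)
  let f : Fin N → ι := Subtype.val ∘ e.symm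
  have hrange : Set.range f = ⋃ v, ⋃₀ blocks v := by
    rw [Set.range_comp, e.symm.range_eq_univ, Set.image_univ, Subtype.range_coe]
  have hconf := h.preimage (Subtype.val_injective.comp e.symm.injective) fun v => by
    rw [hrange]
    exact Set.subset_iUnion (fun v => ⋃₀ blocks v) v
  refine ⟨_, hconf, fun i => ?_⟩
  have hi : f i ∈ ⋃ v, ⋃₀ blocks v := by
    rw [← hrange]
    exact Set.mem_range_self i
  obtain ⟨v, S, hS, hiS⟩ := Set.mem_iUnion.mp hi
  exact hconf.singleton_mem v i ⟨_, Set.mem_image_of_mem _ hS, hiS⟩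

end IsBlockConfiguration

end BlockConfiguration

namespace SimpleGraph

variable {V : Type*} [Fintype V] (G : SimpleGraph V) [DecidableRel G.Adj]

structure IsSeparatedSubcubic : Prop where
  degree_le : ∀ v, G.degree v ≤ 3
  not_adj : ∀ {u v}, G.degree u = 3 → G.degree v = 3 → ¬ G.Adj u v
  eq_of_adj_of_adj : ∀ {u v w}, G.degree u = 3 → G.degree w = 3 → G.Adj u v → G.Adj v w → u = w
  not_adj_of_adj_of_adj : ∀ {u v w}, G.Adj u v → G.Adj v w → ¬ G.Adj u w

/- Coordinates live in `Sym2 V ⊕ V`: `.inl e` for an edge, `.inr v` for a leaf. The edge from a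
trivalent vertex `u` to `t u` is marked and gets no coordinate of its own; its point is the sum
of the points of the two other edges at `u`, whose coordinates form `G.star u (t u)`. -/

variable (t : V → V)

def Marks (u v : V) : Prop := G.degree u = 3 ∧ t u = v

def star (w x : V) : Set (Sym2 V ⊕ V) := {i | ∃ y, G.Adj w y ∧ y ≠ x ∧ i = .inl s(w, y)}

def edgeBlock (u v : V) : Set (Sym2 V ⊕ V) :=
  {i | (G.Marks t u v ∧ i ∈ G.star u v) ∨ (G.Marks t v u ∧ i ∈ G.star v u) ∨
    (¬ G.Marks t u v ∧ ¬ G.Marks t v u ∧ i = .inl s(u, v))}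

def blocks (v : V) : Set (Set (Sym2 V ⊕ V)) :=
  G.edgeBlock t v '' {x | G.Adj v x ∧ ¬ G.Marks t v x} ∪ {S | G.degree v = 1 ∧ S = {.inr v}}

def markedEdges : Set (Sym2 V) := (fun w => s(w, t w)) '' {w | G.degree w = 3}

def coordinates : Set (Sym2 V ⊕ V) :=
  Sum.inl '' (G.edgeSet \ G.markedEdges t) ∪ Sum.inr '' {v | G.degree v = 1}

variable {G t} {u v w x y : V}

theorem Marks.adj (ht : ∀ v, G.Adj v (t v)) (h : G.Marks t u v) : G.Adj u v := h.2 ▸ ht u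

theorem edgeBlock_comm : G.edgeBlock t u v = G.edgeBlock t v u := by
  ext i
  simp only [edgeBlock, Set.mem_ofPred_eq, Sym2.eq_swap]
  tauto

theorem inr_notMem_edgeBlock : .inr w ∉ G.edgeBlock t u v := by
  simp [edgeBlock, star]

theorem edgeBlock_of_not_marks (huv : ¬ G.Marks t u v) (hvu : ¬ G.Marks t v u) :
    G.edgeBlock t u v = {.inl s(u, v)} := by
  ext i
  simp [edgeBlock, huv, hvu]

theorem exists_two_adj_ne_of_degree_eq_three (h3 : G.degree w = 3) (x : V) :
    ∃ y₁ y₂, y₁ ≠ y₂ ∧ G.Adj w y₁ ∧ G.Adj w y₂ ∧ y₁ ≠ x ∧ y₂ ≠ x := by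
  classical
  have hcard : 1 < ((G.neighborFinset w).erase x).card := by
    have := Finset.pred_card_le_card_erase (s := G.neighborFinset w) (a := x)
    rw [card_neighborFinset_eq_degree, h3] at this
    omega
  obtain ⟨y₁, h₁, y₂, h₂, hne⟩ := Finset.one_lt_card.mp hcard
  simp only [Finset.mem_erase, mem_neighborFinset] at h₁ h₂
  exact ⟨y₁, y₂, hne, h₁.2, h₂.2, h₁.1, h₂.1⟩

theorem edgeBlock_nonempty (u x : V) : (G.edgeBlock t u x).Nonempty := by
  by_cases hx : G.Marks t u x
  · obtain ⟨y, -, -, hy, -, hyx, -⟩ := exists_two_adj_ne_of_degree_eq_three hx.1 x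
    exact ⟨_, Or.inl ⟨hx, y, hy, hyx, rfl⟩⟩
  by_cases hu : G.Marks t x u
  · obtain ⟨y, -, -, hy, -, hyu, -⟩ := exists_two_adj_ne_of_degree_eq_three hu.1 u
    exact ⟨_, Or.inr (Or.inl ⟨hu, y, hy, hyu, rfl⟩)⟩
  · exact ⟨_, Or.inr (Or.inr ⟨hx, hu, rfl⟩)⟩

theorem eq_of_inr_mem_sUnion_blocks (h : .inr w ∈ ⋃₀ G.blocks t v) : w = v := by
  obtain ⟨S, ⟨x, -, rfl⟩ | ⟨-, rfl⟩, hw⟩ := h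
  · exact absurd hw inr_notMem_edgeBlock
  · simpa using hw

theorem eq_or_marks_of_inl_mem_sUnion_blocks {a b : V}
    (h : .inl s(a, b) ∈ ⋃₀ G.blocks t v) :
    v = a ∨ v = b ∨ G.Marks t a v ∨ G.Marks t b v := by
  obtain ⟨S, ⟨x, ⟨-, hvx⟩, rfl⟩ | ⟨-, rfl⟩, hab⟩ := h
  · simp only [edgeBlock, star, Set.mem_ofPred_eq, hvx, false_and, false_or,
      Sum.inl.injEq] at hab
    rcases hab with ⟨hxv, y, -, -, hab⟩ | ⟨-, -, hab⟩ <;>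
      rcases Sym2.eq_iff.mp hab with ⟨rfl, rfl⟩ | ⟨rfl, rfl⟩ <;> simp_all
  · simp at hab

theorem mem_markedEdges_of_marks (h : G.Marks t u v) : s(u, v) ∈ G.markedEdges t :=
  ⟨u, h.1, by simp [h.2]⟩

theorem marks_of_mem_markedEdges (h : s(u, v) ∈ G.markedEdges t) :
    G.Marks t u v ∨ G.Marks t v u := by
  obtain ⟨w, h3, he⟩ := h
  rcases Sym2.eq_iff.mp he with ⟨rfl, rfl⟩ | ⟨rfl, rfl⟩
  exacts [Or.inl ⟨h3, rfl⟩, Or.inr ⟨h3, rfl⟩]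

theorem exists_singleton_mem_blocks {i : Sym2 V ⊕ V} (hi : i ∈ G.coordinates t) :
    ∃ w, {i} ∈ G.blocks t w := by
  obtain ⟨e, ⟨he, hnm⟩, rfl⟩ | ⟨v, h1, rfl⟩ := hi
  · induction e using Sym2.ind with
    | h a b =>
      have hab : ¬ G.Marks t a b := fun h => hnm (mem_markedEdges_of_marks h)
      have hba : ¬ G.Marks t b a := fun h => hnm (Sym2.eq_swap ▸ mem_markedEdges_of_marks h)
      exact ⟨a, Or.inl ⟨b, ⟨he, hab⟩, edgeBlock_of_not_marks hab hba⟩⟩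
  · exact ⟨v, Or.inr ⟨h1, rfl⟩⟩

namespace IsSeparatedSubcubic

variable (hG : G.IsSeparatedSubcubic)
include hG

theorem not_marks_of_adj (h : G.Marks t u v) (hw : G.Adj u w) : ¬ G.Marks t w x :=
  fun h' => hG.not_adj h.1 h'.1 hw

theorem sUnion_blocks_of_marks (h : G.Marks t u v) : ⋃₀ G.blocks t u = G.star u v := by
  have hnm : ∀ x, G.Adj u x → x ≠ v → G.edgeBlock t u x = {.inl s(u, x)} := fun x hux hxv =>
    edgeBlock_of_not_marks (fun h' => hxv (h'.2.symm.trans h.2)) (hG.not_marks_of_adj h hux)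
  ext i
  constructor
  · rintro ⟨S, ⟨x, ⟨hux, hnx⟩, rfl⟩ | ⟨h1, -⟩, hi⟩
    · have hxv : x ≠ v := fun hxv => hnx ⟨h.1, h.2.trans hxv.symm⟩
      rw [hnm x hux hxv] at hi
      exact ⟨x, hux, hxv, hi⟩
    · exact absurd (h1.symm.trans h.1) (by decide)
  · rintro ⟨x, hux, hxv, rfl⟩
    refine ⟨_, Or.inl ⟨x, ⟨hux, fun h' => hxv (h'.2.symm.trans h.2)⟩, rfl⟩, ?_⟩
    rw [hnm x hux hxv]
    rfl

theorem disjoint_edgeBlock (hvx : G.Adj v x) (hvy : G.Adj v y) (hxy : x ≠ y)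
    (hnx : ¬ G.Marks t v x) (hny : ¬ G.Marks t v y) :
    Disjoint (G.edgeBlock t v x) (G.edgeBlock t v y) := by
  refine Set.disjoint_left.mpr fun i hix hiy => ?_
  simp only [edgeBlock, star, Set.mem_ofPred_eq, hnx, hny, false_and, false_or] at hix hiy
  rcases hix with ⟨hxv, z, hxz, -, rfl⟩ | ⟨-, -, rfl⟩ <;>
    rcases hiy with ⟨hyv, z', -, -, he⟩ | ⟨-, -, he⟩ <;>
    rcases Sym2.eq_iff.mp (Sum.inl_injective he) with ⟨h₁, h₂⟩ | ⟨h₁, h₂⟩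
  · exact hxy h₁
  · exact hG.not_adj hxv.1 hyv.1 (h₂ ▸ hxz)
  · exact hvx.ne h₁.symm
  · exact hxy h₁
  · exact hvy.ne h₁
  · exact hxy h₂
  · exact hxy h₂
  · exact hvy.ne h₁

theorem mem_coordinates_of_mem_sUnion_blocks {i : Sym2 V ⊕ V} (hi : i ∈ ⋃₀ G.blocks t v) :
    i ∈ G.coordinates t := by
  obtain ⟨S, ⟨x, ⟨hvx, hnx⟩, rfl⟩ | ⟨h1, rfl⟩, hi⟩ := hi
  · simp only [edgeBlock, star, Set.mem_ofPred_eq, hnx, false_and, false_or] at hi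
    rcases hi with ⟨hxv, z, hxz, hzv, rfl⟩ | ⟨-, hxv, rfl⟩
    · refine Or.inl ⟨_, ⟨hxz, fun hm => ?_⟩, rfl⟩
      rcases marks_of_mem_markedEdges hm with hxz' | hzx
      · exact hzv (hxz'.2.symm.trans hxv.2)
      · exact hG.not_marks_of_adj hxv hxz hzx
    · exact Or.inl ⟨_, ⟨hvx, fun hm => (marks_of_mem_markedEdges hm).elim hnx hxv⟩, rfl⟩
  · exact Or.inr ⟨v, h1, hi.symm⟩

theorem iUnion_sUnion_blocks : ⋃ v, ⋃₀ G.blocks t v = G.coordinates t := by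
  ext i
  refine ⟨fun hi => ?_, fun hi => ?_⟩
  · obtain ⟨v, hv⟩ := Set.mem_iUnion.mp hi
    exact hG.mem_coordinates_of_mem_sUnion_blocks hv
  · obtain ⟨w, hw⟩ := exists_singleton_mem_blocks hi
    exact Set.mem_iUnion.mpr ⟨w, {i}, hw, rfl⟩

variable (ht : ∀ v, G.Adj v (t v))
include ht

theorem edgeBlock_of_marks (h : G.Marks t u v) : G.edgeBlock t u v = G.star u v := by
  have := hG.not_marks_of_adj h (h.adj ht) (x := u)
  ext i
  simp [edgeBlock, h, this]

theorem exists_marks_of_subset_sUnion_blocks (huv : u ≠ v) (hadj : ¬ G.Adj u v)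
    {S : Set (Sym2 V ⊕ V)} (hS : S ∈ G.blocks t u) (hsub : S ⊆ ⋃₀ G.blocks t v) :
    ∃ x, G.Adj u x ∧ G.Marks t x v := by
  obtain ⟨x, ⟨hux, hnm⟩, rfl⟩ | ⟨-, rfl⟩ := hS
  · by_cases hxu : G.Marks t x u
    · have hv : ∀ y, G.Adj x y → y ≠ u → y = v := fun y hxy hyu => by
        have hy : .inl s(x, y) ∈ G.edgeBlock t u x := by
          rw [edgeBlock_comm, hG.edgeBlock_of_marks ht hxu]
          exact ⟨y, hxy, hyu, rfl⟩
        rcases eq_or_marks_of_inl_mem_sUnion_blocks (hsub hy) with rfl | rfl | hxv | hyv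
        · exact absurd hux hadj
        · rfl
        · exact absurd (hxu.2.symm.trans hxv.2) huv
        · exact absurd hyv (hG.not_marks_of_adj hxu hxy)
      obtain ⟨y₁, y₂, hne, h₁, h₂, h₁u, h₂u⟩ := exists_two_adj_ne_of_degree_eq_three hxu.1 u
      exact absurd ((hv y₁ h₁ h₁u).trans (hv y₂ h₂ h₂u).symm) hne
    · have hi : .inl s(u, x) ∈ G.edgeBlock t u x := by
        rw [edgeBlock_of_not_marks hnm hxu]
        rfl
      rcases eq_or_marks_of_inl_mem_sUnion_blocks (hsub hi) with rfl | rfl | huv' | hxv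
      · exact absurd rfl huv
      · exact absurd hux hadj
      · exact absurd (huv'.adj ht) hadj
      · exact ⟨x, hux, hxv⟩
  · exact absurd (eq_of_inr_mem_sUnion_blocks (hsub rfl)) huv

theorem escape (huv : u ≠ v) (hadj : ¬ G.Adj u v) :
    (∀ S ∈ G.blocks t u, ¬ S ⊆ ⋃₀ G.blocks t v) ∨
      (∀ S ∈ G.blocks t v, ¬ S ⊆ ⋃₀ G.blocks t u) := by
  by_contra! ⟨⟨S, hS, hSv⟩, ⟨S', hS', hS'u⟩⟩
  obtain ⟨x, hux, hxv⟩ := hG.exists_marks_of_subset_sUnion_blocks ht huv hadj hS hSv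
  obtain ⟨x', hvx', hx'u⟩ := hG.exists_marks_of_subset_sUnion_blocks ht (Ne.symm huv)
    (fun h => hadj h.symm) hS' hS'u
  have hxx' : x = x' := hG.eq_of_adj_of_adj hxv.1 hx'u.1 hux.symm (hx'u.adj ht).symm
  subst hxx'
  exact huv (hx'u.2.symm.trans hxv.2)

theorem meets_of_marks (h : G.Marks t u v) : Meets (G.blocks t v) (G.blocks t u) := by
  have hvu := hG.not_marks_of_adj h (h.adj ht) (x := u)
  refine ⟨G.edgeBlock t v u, Or.inl ⟨u, ⟨(h.adj ht).symm, hvu⟩, rfl⟩, Or.inr ?_, ?_⟩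
  · rw [edgeBlock_comm, hG.edgeBlock_of_marks ht h, hG.sUnion_blocks_of_marks h]
  rw [hG.sUnion_blocks_of_marks h]
  rintro T (⟨y, ⟨hvy, hny⟩, rfl⟩ | ⟨-, rfl⟩) hne
  · have hyu : y ≠ u := by rintro rfl; exact hne rfl
    refine Set.disjoint_left.mpr fun i hiT hiu => ?_
    obtain ⟨z, huz, -, rfl⟩ := hiu
    simp only [edgeBlock, star, Set.mem_ofPred_eq, hny, false_and, false_or,
      Sum.inl.injEq] at hiT
    rcases hiT with ⟨hyv, w, -, -, he⟩ | ⟨-, -, he⟩ <;>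
      rcases Sym2.eq_iff.mp he with ⟨rfl, rfl⟩ | ⟨rfl, rfl⟩
    · exact hyu rfl
    · exact hG.not_adj h.1 hyv.1 huz
    · exact (h.adj ht).ne rfl
    · exact hyu rfl
  · refine Set.disjoint_left.mpr fun i hi hiu => ?_
    obtain ⟨z, -, -, rfl⟩ := hiu
    simp at hi

theorem meets_of_not_marks (hadj : G.Adj u v) (huv : ¬ G.Marks t u v)
    (hvu : ¬ G.Marks t v u) : Meets (G.blocks t u) (G.blocks t v) := by
  refine ⟨G.edgeBlock t u v, Or.inl ⟨v, ⟨hadj, huv⟩, rfl⟩,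
    Or.inl (Or.inl ⟨u, ⟨hadj.symm, hvu⟩, edgeBlock_comm⟩), ?_⟩
  rintro T (⟨x, ⟨hux, hnx⟩, rfl⟩ | ⟨-, rfl⟩) hne
  · have hxv : x ≠ v := by rintro rfl; exact hne rfl
    refine Set.disjoint_left.mpr fun i hiT hiv => ?_
    simp only [edgeBlock, star, Set.mem_ofPred_eq, hnx, false_and, false_or] at hiT
    rcases hiT with ⟨hxu, z, hxz, hzu, rfl⟩ | ⟨-, hxu, rfl⟩
    · rcases eq_or_marks_of_inl_mem_sUnion_blocks hiv with rfl | rfl | hxv' | hzv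
      · exact hxv rfl
      · exact hG.not_adj_of_adj_of_adj hadj hxz.symm hux
      · exact hadj.ne (hxu.2.symm.trans hxv'.2)
      · exact hG.not_marks_of_adj hxu hxz hzv
    · rcases eq_or_marks_of_inl_mem_sUnion_blocks hiv with rfl | rfl | huv' | hxv'
      · exact hadj.ne rfl
      · exact hxv rfl
      · exact huv huv'
      · exact hG.not_adj_of_adj_of_adj hadj (hxv'.adj ht).symm hux
  · refine Set.disjoint_left.mpr fun i hi hiv => ?_
    rw [Set.mem_singleton_iff.mp hi] at hiv
    exact hadj.ne (eq_of_inr_mem_sUnion_blocks hiv)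

theorem meets (hadj : G.Adj u v) :
    Meets (G.blocks t u) (G.blocks t v) ∨ Meets (G.blocks t v) (G.blocks t u) := by
  by_cases huv : G.Marks t u v
  · exact Or.inr (hG.meets_of_marks ht huv)
  by_cases hvu : G.Marks t v u
  · exact Or.inl (hG.meets_of_marks ht hvu)
  exact Or.inl (hG.meets_of_not_marks ht hadj huv hvu)

theorem exists_pair_of_two_le_degree (h2 : 2 ≤ G.degree v) :
    ∃ x y, x ≠ y ∧ {z | G.Adj v z ∧ ¬ G.Marks t v z} = {x, y} := by
  classical
  set s := (G.neighborFinset v).filter fun z => ¬ G.Marks t v z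
  have hs : s.card = 2 := by
    by_cases h3 : G.degree v = 3
    · have hs : s = (G.neighborFinset v).erase (t v) := by
        ext z
        simp [s, Marks, h3, and_comm, eq_comm]
      rw [hs, Finset.card_erase_of_mem (by simpa using ht v), card_neighborFinset_eq_degree, h3]
    · have hs : s = G.neighborFinset v := Finset.filter_true_of_mem fun z _ h => h3 h.1
      have hle := hG.degree_le v
      rw [hs, card_neighborFinset_eq_degree]
      omega
  obtain ⟨x, y, hxy, hs'⟩ := Finset.card_eq_two.mp hs
  refine ⟨x, y, hxy, ?_⟩
  rw [← Finset.coe_pair, ← hs']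
  ext z
  simp [s]

theorem isBlockPair_blocks (v : V) : IsBlockPair (G.blocks t v) := by
  by_cases h1 : G.degree v = 1
  · obtain ⟨x, hx⟩ := Finset.card_eq_one.mp ((G.card_neighborFinset_eq_degree v).trans h1)
    refine ⟨G.edgeBlock t v x, {.inr v}, edgeBlock_nonempty _ _, Set.singleton_nonempty _,
      Set.disjoint_singleton_right.mpr inr_notMem_edgeBlock, ?_⟩
    have hbase : {z | G.Adj v z ∧ ¬ G.Marks t v z} = {x} := by
      ext z
      simp [← mem_neighborFinset, hx, Marks, h1]
    rw [blocks, hbase, Set.image_singleton]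
    ext S
    simp [h1, or_comm]
  · have hpos : 0 < G.degree v := G.degree_pos_iff_exists_adj v |>.mpr ⟨_, ht v⟩
    obtain ⟨x, y, hxy, hbase⟩ := hG.exists_pair_of_two_le_degree ht (v := v) (by omega)
    have hx : x ∈ {z | G.Adj v z ∧ ¬ G.Marks t v z} := hbase ▸ by simp
    have hy : y ∈ {z | G.Adj v z ∧ ¬ G.Marks t v z} := hbase ▸ by simp
    refine ⟨_, _, edgeBlock_nonempty _ _, edgeBlock_nonempty _ _,
      hG.disjoint_edgeBlock hx.1 hy.1 hxy hx.2 hy.2, ?_⟩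
    rw [blocks, hbase, Set.image_pair]
    simp [h1]

theorem isBlockConfiguration_blocks : IsBlockConfiguration G (G.blocks t) where
  isBlockPair := hG.isBlockPair_blocks ht
  escape _ _ := hG.escape ht
  meets _ _ := hG.meets ht
  singleton_mem _ _ hi := exists_singleton_mem_blocks (hG.mem_coordinates_of_mem_sUnion_blocks hi)

theorem ncard_coordinates_add_card_edgeFinset [DecidableEq V] :
    (G.coordinates t).ncard + G.edgeFinset.card = 2 * Fintype.card V := by
  have hsub : G.markedEdges t ⊆ G.edgeSet := by
    rintro _ ⟨w, -, rfl⟩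
    exact ht w
  have hinj : Set.InjOn (fun w => s(w, t w)) {w | G.degree w = 3} := by
    intro w hw w' hw' he
    rcases Sym2.eq_iff.mp he with ⟨h, -⟩ | ⟨-, h⟩
    · exact h
    · exact absurd (h ▸ ht w) (hG.not_adj hw hw')
  have hdisj : Disjoint (Sum.inl '' (G.edgeSet \ G.markedEdges t))
      (Sum.inr '' {v | G.degree v = 1}) := by
    refine Set.disjoint_left.mpr ?_
    rintro _ ⟨_, _, rfl⟩ ⟨_, _, h⟩
    cases h
  have hcard : ∀ j, {v | G.degree v = j}.ncard =
      (Finset.univ.filter fun v => G.degree v = j).card :=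
    fun j => by rw [← Set.ncard_coe_finset]; simp
  have hle := Set.ncard_le_ncard hsub
  rw [markedEdges, hinj.ncard_image] at hle
  have hsum : ∑ v, (G.degree v + if G.degree v = 1 then 1 else 0) =
      ∑ v, (2 + if G.degree v = 3 then 1 else 0) := Finset.sum_congr rfl fun v _ => by
    have hle := hG.degree_le v
    have hpos := G.degree_pos_iff_exists_adj v |>.mpr ⟨_, ht v⟩
    split_ifs <;> omega
  rw [Finset.sum_add_distrib, Finset.sum_add_distrib, G.sum_degrees_eq_twice_card_edges,
    Finset.sum_boole, Finset.sum_boole, Finset.sum_const, Finset.card_univ, smul_eq_mul] at hsum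
  rw [coordinates, Set.ncard_union_eq hdisj, Set.ncard_image_of_injective _ Sum.inl_injective,
    Set.ncard_image_of_injective _ Sum.inr_injective, Set.ncard_sdiff hsub, markedEdges,
    hinj.ncard_image, ← coe_edgeFinset, Set.ncard_coe_finset, hcard, hcard] at *
  simp only [Nat.cast_id] at hsum
  omega

end IsSeparatedSubcubic

theorem isSeparatedSubcubic_of_three_le_dist [DecidableEq V] (hdeg : ∀ v, G.degree v ≤ 3)
    (hdist : ∀ u v, G.degree u = 3 → G.degree v = 3 → u ≠ v → 3 ≤ G.dist u v)
    (htri : G.CliqueFree 3) : G.IsSeparatedSubcubic where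
  degree_le := hdeg
  not_adj hu hv huv := by
    have := hdist _ _ hu hv huv.ne
    rw [dist_eq_one_iff_adj.mpr huv] at this
    omega
  eq_of_adj_of_adj hu hw huv hvw := by
    by_contra hne
    have h3 := hdist _ _ hu hw hne
    have h2 := dist_le (.cons huv (.cons hvw .nil))
    simp only [Walk.length_cons, Walk.length_nil] at h2
    omega
  not_adj_of_adj_of_adj huv hvw huw := htri _ (is3Clique_triple_iff.mpr ⟨huv, huw, hvw⟩)

end SimpleGraph

theorem graphCurve_embedding_lines_cut_out_by_variables_and_binomials_general
    {V : Type} [Fintype V] [DecidableEq V] (G : SimpleGraph V) [DecidableRel G.Adj]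
    (hconn : G.Connected)
    (hdeg : ∀ v : V, G.degree v ≤ 3)
    (hdist : ∀ u v : V, G.degree u = 3 → G.degree v = 3 → u ≠ v → 3 ≤ G.dist u v)
    (htri : G.CliqueFree 3)
    (d m g n : ℕ)
    (hd : Fintype.card V = d)
    (hm : G.edgeFinset.card = m)
    (hg : m + 1 = d + g)
    (hd2 : 2 ≤ d)
    (hn : d = n + g)
    (k : Type) [Field k] [IsAlgClosed k] :
    ∃ W : V → Submodule k (Fin (n + 1) → k),
      (∀ v, Module.finrank k (W v) = 2) ∧
      Function.Injective W ∧
      (⨆ v, W v) = ⊤ ∧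
      (∀ u v : V, u ≠ v → (W u ⊓ W v ≠ ⊥ ↔ G.Adj u v)) ∧
      (∀ u v : V, G.Adj u v → Module.finrank k ↥(W u ⊓ W v) = 1) ∧
      (∀ v : V, ∃ S : Set (MvPolynomial (Fin (n + 1)) k),
        (∀ p ∈ S, (∃ i, p = X i) ∨ ∃ j l, j ≠ l ∧ p = X j - X l) ∧
        Ideal.span S = vanishingIdeal k (n + 1) (W v : Set (Fin (n + 1) → k))) := by
  have : Nontrivial V := Fintype.one_lt_card_iff_nontrivial.mp (by omega)
  choose t ht using hconn.preconnected.exists_adj_of_nontrivial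
  have hG := G.isSeparatedSubcubic_of_three_le_dist hdeg hdist htri
  have hcard : Nat.card (⋃ v, ⋃₀ G.blocks t v) = n + 1 := by
    have := hG.ncard_coordinates_add_card_edgeFinset ht
    rw [hG.iUnion_sUnion_blocks, Nat.card_coe_set_eq]
    omega
  obtain ⟨blocks, hconf, hcover⟩ :=
    (hG.isBlockConfiguration_blocks ht).exists_fin_of_natCard_eq hcard
  exact ⟨fun v => blockSpan k (blocks v), fun v => (hconf.isBlockPair v).finrank_blockSpan,
    hconf.injective_blockSpan, iSup_blockSpan_eq_top blocks hcover,
    fun _ _ => hconf.blockSpan_inf_ne_bot_iff, fun _ _ => hconf.finrank_blockSpan_inf,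
    fun v => (hconf.isBlockPair v).exists_span_eq_vanishingIdeal⟩

/-- Let `G` be a finite simple connected graph with `d ≥ 2` vertices and
`m` edges in which every vertex has degree at most 3 and some vertex has degree less than 3,
the graph distance between any two distinct vertices of degree 3 is at least 3, and `G`
contains no 3-cycles; set `g = m − d + 1` and `n = d − g`.  Then there exists a family
`(W_v)` of 2-dimensional linear subspaces of `k^{n+1}` (affine cones of lines in `P^n`),
pairwise distinct, spanning `k^{n+1}`, with `W_u ∩ W_v ≠ 0` iff `u ~ v` (and then
1-dimensional), such that each vanishing ideal `I(W_v)` is generated by linear forms each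
of which is a variable `x_i` or a binomial `x_j − x_k`. -/
theorem graphCurve_embedding_lines_cut_out_by_variables_and_binomials
    {V : Type} [Fintype V] [DecidableEq V] (G : SimpleGraph V) [DecidableRel G.Adj]
    (hconn : G.Connected)
    (hdeg : ∀ v : V, G.degree v ≤ 3)
    (hsub : ∃ v : V, G.degree v < 3)
    (hdist : ∀ u v : V, G.degree u = 3 → G.degree v = 3 → u ≠ v → 3 ≤ G.dist u v)
    (htri : G.CliqueFree 3)
    (d m g n : ℕ)
    (hd : Fintype.card V = d)
    (hm : G.edgeFinset.card = m)
    (hg : m + 1 = d + g)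
    (hd2 : 2 ≤ d)
    (hn : d = n + g)
    (k : Type) [Field k] [IsAlgClosed k] [CharZero k] :
    ∃ W : V → Submodule k (Fin (n + 1) → k),
      (∀ v, Module.finrank k (W v) = 2) ∧
      Function.Injective W ∧
      (⨆ v, W v) = ⊤ ∧
      (∀ u v : V, u ≠ v → (W u ⊓ W v ≠ ⊥ ↔ G.Adj u v)) ∧
      (∀ u v : V, G.Adj u v → Module.finrank k ↥(W u ⊓ W v) = 1) ∧
      (∀ v : V, ∃ S : Set (MvPolynomial (Fin (n + 1)) k),
        (∀ p ∈ S, (∃ i, p = X i) ∨ ∃ j l, j ≠ l ∧ p = X j - X l) ∧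
        Ideal.span S = vanishingIdeal k (n + 1) (W v : Set (Fin (n + 1) → k))) :=
  graphCurve_embedding_lines_cut_out_by_variables_and_binomials_general G hconn hdeg hdist htri d m
    g n hd hm hg hd2 hn k
end

section
/- Let S = k[x_1, …, x_n] be a polynomial ring over a field k. Let A and B be disjoint subsets of the set of variables, let L_I be the ideal generated by the variables in A, and let L_J be the ideal generated by the variables in B. Let Q_J be an ideal generated by a set of monomials of degree 2, none of which is divisible by any variable in B. Let Q_I be an ideal with Q_I ⊆ L_J + Q_J, and assume Q_J ⊆ L_I + Q_I. Set I = L_I + Q_I and J = L_J + Q_J. Then I ∩ J = L_I·L_J + Q_I + Q_J. -/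
/-!
Let `π` be the substitution sending the variables of `B` to `0` and fixing the others. Modulo
`L_J` it is the identity, it kills `L_J`, and it fixes the generators of `L_I` and of `Q_J`.
Hence `π (J) ⊆ Q_J`, and on `L_I` the difference `f - π f` lies in `L_I·L_J`. An element `a + q`
of `I ∩ J` with `a ∈ L_I`, `q ∈ Q_I` then splits as `(a - π a) + π a + q`, with the three
summands in `L_I·L_J`, `Q_J` and `Q_I`.
-/

open MvPolynomial

namespace Ideal

section CommSemiring

variable {R : Type*} [CommSemiring R]

theorem span_le_comap_of_forall_map_eq (φ : R →+* R) {s : Set R} (hs : ∀ x ∈ s, φ x = x) :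
    span s ≤ (span s).comap φ :=
  span_le.2 fun x hx => by simpa [hs x hx] using subset_span hx

theorem mul_add_add_le_inf {LI LJ QI QJ : Ideal R} (hQI : QI ≤ LJ + QJ) (hQJ : QJ ≤ LI + QI) :
    LI * LJ + QI + QJ ≤ (LI + QI) ⊓ (LJ + QJ) :=
  le_inf (sup_le (sup_le (mul_le_left.trans le_sup_left) le_sup_right) hQJ)
    (sup_le (sup_le (mul_le_right.trans le_sup_left) hQI) le_sup_right)

end CommSemiring

variable {R : Type*} [CommRing R]

theorem sub_map_mem_span_mul (φ : R →+* R) {K : Ideal R} (hK : ∀ f, f - φ f ∈ K) {s : Set R}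
    (hs : ∀ x ∈ s, φ x = x) {f : R} (hf : f ∈ span s) : f - φ f ∈ span s * K := by
  induction hf using Submodule.span_induction with
  | mem x hx => simp [hs x hx]
  | zero => simp
  | add x y _ _ hx hy => simpa [sub_add_sub_comm] using add_mem hx hy
  | smul r x hx ih =>
    have hφx : φ x ∈ span s := span_le_comap_of_forall_map_eq φ hs hx
    have hsplit : r • x - φ (r • x) = r * (x - φ x) + φ x * (r - φ r) := by
      rw [smul_eq_mul, map_mul]; ring
    rw [hsplit]
    exact add_mem (mul_mem_left _ _ ih) (mul_mem_mul hφx (hK r))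

theorem inf_le_mul_add_add (φ : R →+* R) {LI LJ QI QJ : Ideal R}
    (hLI : ∀ f ∈ LI, f - φ f ∈ LI * LJ) (hLJ : LJ ≤ RingHom.ker φ) (hQJ : QJ ≤ QJ.comap φ)
    (hQI : QI ≤ LJ + QJ) : (LI + QI) ⊓ (LJ + QJ) ≤ LI * LJ + QI + QJ := by
  have hφJ : LJ + QJ ≤ QJ.comap φ :=
    sup_le (hLJ.trans ((RingHom.ker_eq_comap_bot φ).trans_le (comap_mono bot_le))) hQJ
  rintro f ⟨hfI, hfJ⟩
  obtain ⟨a, ha, q, hq, rfl⟩ := Submodule.mem_sup.1 hfI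
  have haJ : a ∈ LJ + QJ := by simpa using sub_mem hfJ (hQI hq)
  have hsplit : a + q = (a - φ a) + q + φ a := by ring
  rw [hsplit]
  exact add_mem
    (add_mem (mem_sup_left (mem_sup_left (hLI a ha))) (mem_sup_left (mem_sup_right hq)))
    (mem_sup_right (hφJ haJ))

end Ideal

namespace MvPolynomial

variable {σ R : Type*}

section CommSemiring

variable [CommSemiring R]

noncomputable def killVars (B : Set σ) : MvPolynomial σ R →ₐ[R] MvPolynomial σ R :=
  aeval (Bᶜ.indicator X)

theorem killVars_X_of_mem {B : Set σ} {i : σ} (hi : i ∈ B) : killVars (R := R) B (X i) = 0 := by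
  simp [killVars, Set.indicator_of_notMem (Set.notMem_compl_iff.2 hi)]

theorem killVars_X_of_notMem {B : Set σ} {i : σ} (hi : i ∉ B) :
    killVars (R := R) B (X i) = X i := by
  simp [killVars, Set.indicator_of_mem (Set.mem_compl hi)]

theorem span_X_image_le_ker_killVars (B : Set σ) :
    Ideal.span (X '' B) ≤ RingHom.ker (killVars (R := R) B) :=
  Ideal.span_le.2 fun _ ⟨_, hi, hX⟩ => hX ▸ killVars_X_of_mem hi

end CommSemiring

theorem sub_killVars_mem_span [CommRing R] (B : Set σ) (f : MvPolynomial σ R) :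
    f - killVars B f ∈ Ideal.span (X '' B) := by
  set K : Ideal (MvPolynomial σ R) := Ideal.span (X '' B)
  have hmod : (Ideal.Quotient.mkₐ R K).comp (killVars B) = Ideal.Quotient.mkₐ R K := by
    refine algHom_ext fun i => ?_
    by_cases hi : i ∈ B
    · have hXi : X i ∈ K := Ideal.subset_span (Set.mem_image_of_mem X hi)
      simp [killVars_X_of_mem hi, (Ideal.Quotient.eq_zero_iff_mem.2 hXi).symm]
    · simp [killVars_X_of_notMem hi]
  simpa [Ideal.Quotient.mk_eq_mk_iff_sub_mem] using (congrArg (· f) hmod).symm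

end MvPolynomial

/-- Let `S = k[x_1, …, x_n]` be a polynomial ring over a field `k`.  Let
`A` and `B` be disjoint sets of variables, `L_I = (A)`, `L_J = (B)`.  Let `Q_J` be generated
by a set of degree-2 monomials none of which is divisible by a variable in `B`, and let
`Q_I` be an ideal with `Q_I ⊆ L_J + Q_J` and `Q_J ⊆ L_I + Q_I`.  Setting `I = L_I + Q_I`
and `J = L_J + Q_J`, one has `I ∩ J = L_I·L_J + Q_I + Q_J`. -/
theorem ideal_inter_eq_product_add
    {k : Type} [Field k] (n : ℕ)
    (A B : Set (Fin n)) (hAB : Disjoint A B)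
    (LI LJ QI QJ : Ideal (MvPolynomial (Fin n) k))
    (hLI : LI = Ideal.span (MvPolynomial.X '' A))
    (hLJ : LJ = Ideal.span (MvPolynomial.X '' B))
    (M : Set (MvPolynomial (Fin n) k))
    (hMmon : ∀ p ∈ M, ∃ i j : Fin n, i ∉ B ∧ j ∉ B ∧ p = X i * X j)
    (hQJ : QJ = Ideal.span M)
    (hQI : QI ≤ LJ + QJ)
    (hQJI : QJ ≤ LI + QI)
    (I J : Ideal (MvPolynomial (Fin n) k))
    (hI : I = LI + QI) (hJ : J = LJ + QJ) :
    I ⊓ J = LI * LJ + QI + QJ := by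
  subst hI hJ
  let π : MvPolynomial (Fin n) k →+* MvPolynomial (Fin n) k := (killVars B).toRingHom
  have hπA : ∀ x ∈ X '' A, π x = x := by
    rintro _ ⟨a, ha, rfl⟩
    exact killVars_X_of_notMem (hAB.notMem_of_mem_left ha)
  have hπM : ∀ p ∈ M, π p = p := by
    intro p hp
    obtain ⟨i, j, hi, hj, rfl⟩ := hMmon p hp
    simp [π, killVars_X_of_notMem hi, killVars_X_of_notMem hj]
  refine le_antisymm (Ideal.inf_le_mul_add_add π ?_ ?_ ?_ hQI) (Ideal.mul_add_add_le_inf hQI hQJI)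
  · subst hLI hLJ
    exact fun f hf => Ideal.sub_map_mem_span_mul π (sub_killVars_mem_span B) hπA hf
  · exact hLJ ▸ span_X_image_le_ker_killVars B
  · exact hQJ ▸ Ideal.span_le_comap_of_forall_map_eq π hπM
end

section
/- Let k be an algebraically closed field of characteristic zero, let n ≥ 4, and let e_0, …, e_{n−1} be the standard basis of k^n. For each i (indices taken modulo n) let L_i be the 2-dimensional subspace of k^n spanned by e_i and e_{i+1}, so that L_0, …, L_{n−1} form a cycle of n lines. Then the vanishing ideal of the union ⋃_{i=0}^{n−1} L_i in k[x_0, …, x_{n−1}] is generated by the squarefree quadratic monomials x_i·x_j for all pairs i ≠ j with j ≢ i+1 and j ≢ i−1 modulo n. -/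
/-!
On the line `L_i` only the coordinates `x_i, x_{i+1}` survive, so, `k` being infinite, a
polynomial vanishes on `L_i` exactly when none of its monomials is supported in `{i, i+1}`.
Hence the vanishing ideal of the cycle is the monomial ideal spanned by the monomials whose
support lies in no edge `{i, i+1}` of the `n`-cycle. As the `n`-cycle has no triangles for
`n ≥ 4`, such a support is precisely one containing two non-adjacent indices, i.e. one
divisible by a generator `x_i x_j`.
-/

open MvPolynomial

theorem mem_vanishingIdeal_iUnion {k ι : Type*} [CommRing k] {N : ℕ} {Z : ι → Set (Fin N → k)}
    {p : MvPolynomial (Fin N) k} :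
    p ∈ vanishingIdeal k N (⋃ i, Z i) ↔ ∀ i, ∀ x ∈ Z i, eval x p = 0 :=
  ⟨fun hp i x hx => hp x (Set.mem_iUnion_of_mem i hx),
    fun hp x hx => (Set.mem_iUnion.mp hx).elim fun i hi => hp i x hi⟩

theorem Submodule.mem_span_pair_single_iff {k σ : Type*} [Semiring k] [DecidableEq σ] {i j : σ}
    (hij : i ≠ j) (x : σ → k) :
    x ∈ Submodule.span k {Pi.single i 1, Pi.single j 1} ↔ ∀ m ∉ ({i, j} : Set σ), x m = 0 := by
  rw [Submodule.mem_span_pair]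
  constructor
  · rintro ⟨a, b, rfl⟩ m hm
    simp_all
  · intro hx
    refine ⟨x i, x j, funext fun m => ?_⟩
    by_cases hmi : m = i
    · subst hmi; simp [hij]
    by_cases hmj : m = j
    · subst hmj; simp [Ne.symm hij]
    simp [hmi, hmj, hx m (by simp [hmi, hmj])]

theorem Finsupp.single_add_single_le_iff {σ : Type*} {i j : σ} (hij : i ≠ j) (d : σ →₀ ℕ) :
    single i 1 + single j 1 ≤ d ↔ i ∈ d.support ∧ j ∈ d.support := by
  classical
  simp only [le_def, mem_support_iff, add_apply, single_apply]
  constructor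
  · intro h
    have hi := h i
    have hj := h j
    simp only [if_pos, if_neg hij, if_neg (Ne.symm hij)] at hi hj
    omega
  · rintro ⟨hi, hj⟩ m
    by_cases hmi : i = m <;> by_cases hmj : j = m <;> simp_all <;> omega

open Fin.CommRing in
theorem Fin.add_natCast_ne_self {n m : ℕ} [NeZero n] (h0 : 0 < m) (hmn : m < n) (a : Fin n) :
    a + m ≠ a := by
  intro h
  have hm : (m : Fin n) = 0 := by linear_combination h
  rw [Fin.natCast_eq_zero] at hm
  exact absurd (Nat.le_of_dvd h0 hm) (by omega)

theorem Fin.forall_not_subset_pair_iff_exists_nonadjacent {n : ℕ} [NeZero n] (hn : 4 ≤ n)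
    (s : Finset (Fin n)) :
    (∀ i, ¬ (s : Set (Fin n)) ⊆ {i, i + 1}) ↔
      ∃ a ∈ s, ∃ c ∈ s, a ≠ c ∧ c ≠ a + 1 ∧ c ≠ a - 1 := by
  constructor
  · intro hs
    obtain ⟨a, ha⟩ : s.Nonempty :=
      Finset.nonempty_iff_ne_empty.mpr (by rintro rfl; exact hs 0 (by simp))
    by_contra! hclose
    have hnear : ∀ c ∈ s, c = a - 1 ∨ c = a ∨ c = a + 1 := by
      intro c hc
      by_cases hca : c = a; · exact Or.inr (Or.inl hca)
      by_cases hca' : c = a + 1; · exact Or.inr (Or.inr hca')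
      exact Or.inl (hclose a ha c hc (Ne.symm hca) hca')
    by_cases hsucc : a + 1 ∈ s
    · by_cases hpred : a - 1 ∈ s
      · open Fin.CommRing in
        have hfar : a + 1 = a - 1 - 1 := hclose (a - 1) hpred (a + 1) hsucc
          (fun h => add_natCast_ne_self (m := 2) (by norm_num) (by omega) (a - 1)
            (by push_cast; linear_combination h.symm))
          (fun h => add_natCast_ne_self (m := 1) (by norm_num) (by omega) a
            (by push_cast; linear_combination h))
        open Fin.CommRing in
        exact add_natCast_ne_self (m := 3) (by norm_num) (by omega) (a + 1)
          (by push_cast; linear_combination hfar)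
      · refine hs a fun c hc => ?_
        rcases hnear c hc with rfl | rfl | rfl
        · exact absurd hc hpred
        all_goals simp
    · refine hs (a - 1) fun c hc => ?_
      rcases hnear c hc with rfl | rfl | rfl
      · simp
      · simp
      · exact absurd hc hsucc
  · rintro ⟨a, ha, c, hc, hac, hc1, hc2⟩ i hs
    rcases hs ha with rfl | rfl <;> rcases hs hc with rfl | rfl
    · exact hac rfl
    · exact hc1 rfl
    · exact hc2 (add_sub_cancel_right _ _).symm
    · exact hac rfl

namespace MvPolynomial

variable {σ R : Type*} [CommRing R]

theorem mem_span_X_mul_X_iff {P : σ → σ → Prop} (hP : ∀ i j, P i j → i ≠ j)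
    {p : MvPolynomial σ R} :
    p ∈ Ideal.span {q | ∃ i j, P i j ∧ q = X i * X j} ↔
      ∀ d ∈ p.support, ∃ i ∈ d.support, ∃ j ∈ d.support, P i j := by
  have hgen : {q : MvPolynomial σ R | ∃ i j, P i j ∧ q = X i * X j} =
      (fun s => monomial s 1) ''
        {s | ∃ i j, P i j ∧ s = Finsupp.single i 1 + Finsupp.single j 1} := by
    ext q
    simp only [Set.mem_ofPred_eq, Set.mem_image]
    constructor
    · rintro ⟨i, j, hij, rfl⟩
      exact ⟨_, ⟨i, j, hij, rfl⟩, by rw [X, X, monomial_mul, mul_one]⟩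
    · rintro ⟨_, ⟨i, j, hij, rfl⟩, rfl⟩
      exact ⟨i, j, hij, by rw [X, X, monomial_mul, mul_one]⟩
  rw [hgen, mem_ideal_span_monomial_image]
  refine forall₂_congr fun d _ => ⟨?_, ?_⟩
  · rintro ⟨_, ⟨i, j, hij, rfl⟩, hle⟩
    obtain ⟨hi, hj⟩ := (Finsupp.single_add_single_le_iff (hP i j hij) d).mp hle
    exact ⟨i, hi, j, hj, hij⟩
  · rintro ⟨i, hi, j, hj, hij⟩
    exact ⟨_, ⟨i, j, hij, rfl⟩, (Finsupp.single_add_single_le_iff (hP i j hij) d).mpr ⟨hi, hj⟩⟩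

theorem eval_killCompl {τ : Type*} {f : σ → τ} (hf : f.Injective) (p : MvPolynomial τ R)
    (y : σ → R) : eval y (killCompl hf p) = eval (Function.extend f y 0) p := by
  classical
  rw [killCompl, aeval_eq_bind₁, eval, eval₂Hom_bind₁]
  congr 2
  funext i
  by_cases h : i ∈ Set.range f
  · obtain ⟨a, rfl⟩ := h
    simp [hf.extend_apply]
  · simp [h, Function.extend_apply' _ _ _ h]

theorem eval_eq_zero_of_forall_support_not_subset {T : Set σ} {p : MvPolynomial σ R}
    (hp : ∀ d ∈ p.support, ¬ ↑d.support ⊆ T) {x : σ → R} (hx : ∀ m ∉ T, x m = 0) :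
    eval x p = 0 := by
  rw [eval_eq]
  refine Finset.sum_eq_zero fun d hd => ?_
  obtain ⟨m, hmd, hmT⟩ := Set.not_subset.mp (hp d hd)
  rw [Finset.prod_eq_zero hmd (by rw [hx m hmT, zero_pow (Finsupp.mem_support_iff.mp hmd)]),
    mul_zero]

variable [IsDomain R] [Infinite R]

theorem coeff_eq_zero_of_forall_eval_eq_zero {T : Set σ} {p : MvPolynomial σ R}
    (hp : ∀ x : σ → R, (∀ m ∉ T, x m = 0) → eval x p = 0) {d : σ →₀ ℕ} (hd : ↑d.support ⊆ T) :
    coeff d p = 0 := by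
  -- killing the variables outside `T` leaves a polynomial in the variables of `T` that
  -- vanishes everywhere and has the same coefficients as `p` on monomials supported in `T`
  have hkill : killCompl Subtype.val_injective p = (0 : MvPolynomial T R) := by
    refine funext fun y => ?_
    rw [eval_killCompl, map_zero]
    refine hp _ fun m hm => ?_
    rw [Function.extend_apply' _ _ _ (by simpa using hm), Pi.zero_apply]
  have := congrArg (coeff (d.comapDomain Subtype.val Subtype.val_injective.injOn)) hkill
  rwa [coeff_killCompl, Finsupp.mapDomain_comapDomain _ Subtype.val_injective d (by simpa using hd),
    coeff_zero] at this

theorem forall_eval_eq_zero_iff_forall_support_not_subset (T : Set σ) (p : MvPolynomial σ R) :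
    (∀ x : σ → R, (∀ m ∉ T, x m = 0) → eval x p = 0) ↔ ∀ d ∈ p.support, ¬ ↑d.support ⊆ T :=
  ⟨fun hp _ hd hdT => mem_support_iff.mp hd (coeff_eq_zero_of_forall_eval_eq_zero hp hdT),
    fun hp _ hx => eval_eq_zero_of_forall_support_not_subset hp hx⟩

end MvPolynomial

theorem cycle_of_lines_ideal_generated_by_quadratic_monomials_general
    {k : Type} [Field k] [IsAlgClosed k]
    (n : ℕ) [NeZero n] (hn : 4 ≤ n)
    (L : Fin n → Submodule k (Fin n → k))
    (hL : ∀ i : Fin n,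
      L i = Submodule.span k {Pi.single i (1 : k), Pi.single (i + 1) (1 : k)}) :
    vanishingIdeal k n (⋃ i : Fin n, (L i : Set (Fin n → k))) =
      Ideal.span {q : MvPolynomial (Fin n) k |
        ∃ i j : Fin n, i ≠ j ∧ j ≠ i + 1 ∧ j ≠ i - 1 ∧ q = X i * X j} := by
  have hLcoord : ∀ i x, x ∈ L i ↔ ∀ m ∉ ({i, i + 1} : Set (Fin n)), x m = 0 := fun i x => by
    open Fin.CommRing in
    rw [hL, Submodule.mem_span_pair_single_iff]
    simpa using (Fin.add_natCast_ne_self (m := 1) one_pos (by omega) i).symm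
  ext p
  simp only [← and_assoc]
  rw [mem_span_X_mul_X_iff fun i j h => h.1.1]
  calc p ∈ _root_.vanishingIdeal k n (⋃ i, (L i : Set (Fin n → k)))
      ↔ ∀ i, ∀ x : Fin n → k, (∀ m ∉ ({i, i + 1} : Set (Fin n)), x m = 0) → eval x p = 0 := by
        simp only [mem_vanishingIdeal_iUnion, SetLike.mem_coe, hLcoord]
    _ ↔ ∀ i, ∀ d ∈ p.support, ¬ ↑d.support ⊆ ({i, i + 1} : Set (Fin n)) :=
        forall_congr' fun i => forall_eval_eq_zero_iff_forall_support_not_subset _ p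
    _ ↔ ∀ d ∈ p.support, ∃ a ∈ d.support, ∃ c ∈ d.support, (a ≠ c ∧ c ≠ a + 1) ∧ c ≠ a - 1 := by
        simp only [and_assoc, ← Fin.forall_not_subset_pair_iff_exists_nonadjacent hn]
        exact ⟨fun h d hd i => h i d hd, fun h i d hd => h d hd i⟩

/-- Let `k` be an algebraically closed field of characteristic zero, let
`n ≥ 4`, and for each `i : Fin n` (indices mod `n`) let `L_i ⊆ k^n` be the 2-dimensional
subspace spanned by `e_i` and `e_{i+1}`, so that `L_0, …, L_{n-1}` form a cycle of `n`
lines (the stick elliptic normal curve).  Then the vanishing ideal of `⋃ L_i` is generated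
by the squarefree quadratic monomials `x_i·x_j` with `i ≠ j`, `j ≠ i + 1` and
`j ≠ i − 1 (mod n)`. -/
theorem cycle_of_lines_ideal_generated_by_quadratic_monomials
    {k : Type} [Field k] [IsAlgClosed k] [CharZero k]
    (n : ℕ) [NeZero n] (hn : 4 ≤ n)
    (L : Fin n → Submodule k (Fin n → k))
    (hL : ∀ i : Fin n,
      L i = Submodule.span k {Pi.single i (1 : k), Pi.single (i + 1) (1 : k)}) :
    vanishingIdeal k n (⋃ i : Fin n, (L i : Set (Fin n → k))) =
      Ideal.span {q : MvPolynomial (Fin n) k |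
        ∃ i j : Fin n, i ≠ j ∧ j ≠ i + 1 ∧ j ≠ i - 1 ∧ q = X i * X j} :=
  cycle_of_lines_ideal_generated_by_quadratic_monomials_general n hn L hL
end

section
/- Let G be a finite simple connected graph with d vertices and d + 1 edges (so G has genus g = 2) in which every vertex has degree at most 3. Then the girth of G (the length of a shortest cycle in G) is at most ⌊(2d − 1)/3⌋ + 1. -/
/-!
Let `C` be a shortest cycle, of length `g`. Since `G` is connected with more edges than
vertices, deleting an edge `e` of `C` still leaves a cycle `D`, and `D` avoids `e`. Every
vertex meets an even number of edges of `C` and of `D`, hence of their symmetric difference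
`C ∆ D`, which is nonempty because it contains `e`; so `C ∆ D` contains a cycle. All three
of `C`, `D`, `C ∆ D` therefore have at least `g` edges, while together they cover every edge
of `C ∪ D` exactly twice: `3 g ≤ 2 |C ∪ D| ≤ 2 (d + 1)`.
-/

open SimpleGraph Finset
open scoped symmDiff

theorem Finset.card_symmDiff_add_two_mul_card_inter {α : Type*} [DecidableEq α]
    (s t : Finset α) : #(s ∆ t) + 2 * #(s ∩ t) = #s + #t := by
  have hsd : #(s ∆ t) + #(s ∩ t) = #(s ∪ t) := by
    rw [symmDiff_eq_sup_sdiff_inf]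
    exact card_sdiff_add_card_eq_card (inter_subset_left.trans subset_union_left)
  have := card_union_add_card_inter s t
  omega

namespace SimpleGraph

variable {V : Type*} {G : SimpleGraph V}

theorem IsAcyclic.exists_existsUnique_adj [Finite V] (hG : G.IsAcyclic) {u v : V}
    (huv : G.Adj u v) : ∃ x, ∃! y, G.Adj x y := by
  by_contra! hleaf
  have hlong : ∀ n, ∃ (x y : V) (p : G.Walk x y), p.IsPath ∧ p.length = n + 1 := by
    intro n
    induction n with
    | zero => exact ⟨u, v, .cons huv .nil, by simp [huv.ne], rfl⟩
    | succ n ih =>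
      obtain ⟨x, y, p, hp, hlen⟩ := ih
      obtain ⟨w, hxw, hw⟩ : ∃ w, G.Adj x w ∧ w ≠ p.snd := by
        by_contra! h
        exact hleaf x ⟨p.snd, p.adj_snd (Walk.not_nil_iff_lt_length.mpr (by omega)), h⟩
      have hwp : w ∉ p.support := fun hmem => hw (hG.eq_snd_of_adj_start hp hxw hmem)
      exact ⟨w, y, .cons hxw.symm p, hp.cons hwp, by simp [hlen]⟩
  have := Fintype.ofFinite V
  obtain ⟨x, y, p, hp, hlen⟩ := hlong (Fintype.card V)
  have := hp.length_lt
  omega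

theorem IsAcyclic.card_edgeFinset_lt [Fintype V] [Nonempty V] [Fintype G.edgeSet]
    (hG : G.IsAcyclic) : #G.edgeFinset < Fintype.card V := by
  classical
  obtain ⟨T, hGT, -, hT⟩ := connected_top.exists_isTree_le_of_le_of_isAcyclic le_top hG
  have hcard := hT.card_edgeFinset
  have hle : #G.edgeFinset ≤ #T.edgeFinset := card_le_card (edgeFinset_mono hGT)
  omega

theorem exists_isCycle_notMem_edges [Fintype V] [Nonempty V] [DecidableEq V]
    [Fintype G.edgeSet] (hcard : Fintype.card V < #G.edgeFinset) (e : Sym2 V) :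
    ∃ (u : V) (c : G.Walk u u), c.IsCycle ∧ e ∉ c.edges := by
  classical
  set H := G.deleteEdges {e}
  have hH : ¬ H.IsAcyclic := fun hH => by
    have hlt := hH.card_edgeFinset_lt
    have hsub : G.edgeFinset ⊆ insert e H.edgeFinset := fun f hf => by
      by_cases hfe : f = e <;> simp_all [H, edgeSet_deleteEdges]
    have := (card_le_card hsub).trans (card_insert_le _ _)
    omega
  obtain ⟨u, c, hc⟩ : ∃ (u : V) (c : H.Walk u u), c.IsCycle := by
    simpa [IsAcyclic] using hH
  refine ⟨u, c.mapLe (G.deleteEdges_le _), hc.mapLe _, fun he => ?_⟩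
  rw [Walk.edges_mapLe_eq_edges] at he
  simpa [H, edgeSet_deleteEdges] using c.edges_subset_edgeSet he

theorem Walk.IsTrail.card_edges_toFinset [DecidableEq V] {u v : V} {p : G.Walk u v}
    (hp : p.IsTrail) : #p.edges.toFinset = p.length := by
  rw [List.toFinset_card_of_nodup hp.edges_nodup, Walk.length_edges]

theorem Walk.IsCycle.even_card_filter_mem [DecidableEq V] {u : V} {c : G.Walk u u}
    (hc : c.IsCycle) (x : V) : Even #{e ∈ c.edges.toFinset | x ∈ e} := by
  have h := hc.isTrail.even_countP_edges_iff x
  simp only [ne_eq, not_true_eq_false, false_implies, iff_true] at h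
  rw [List.countP_eq_length_filter, ← List.toFinset_card_of_nodup (hc.edges_nodup.filter _),
    List.toFinset_filter] at h
  simpa using h

theorem exists_isCycle_edges_subset_of_even [DecidableEq V] [Finite V] {S : Finset (Sym2 V)}
    (hSG : ∀ e ∈ S, e ∈ G.edgeSet) (hS : S.Nonempty) (heven : ∀ x, Even #{e ∈ S | x ∈ e}) :
    ∃ (u : V) (c : G.Walk u u), c.IsCycle ∧ c.edges.toFinset ⊆ S := by
  set H := fromEdgeSet (S : Set (Sym2 V))
  have hHG : H ≤ G := fun x y h => hSG _ ((fromEdgeSet_adj _).mp h).1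
  by_cases hH : H.IsAcyclic
  · exfalso
    obtain ⟨e, he⟩ := hS
    induction e using Sym2.ind with | _ u v => ?_
    obtain ⟨x, y, hxy, hy⟩ := hH.exists_existsUnique_adj
      ((fromEdgeSet_adj _).mpr ⟨he, (G.mem_edgeSet.mp (hSG _ he)).ne⟩)
    have hleaf : {e ∈ S | x ∈ e} = {s(x, y)} := by
      ext e
      simp only [mem_filter, mem_singleton]
      constructor
      · rintro ⟨heS, hxe⟩
        obtain ⟨z, rfl⟩ := Sym2.mem_iff_exists.mp hxe
        rw [hy z ((fromEdgeSet_adj _).mpr ⟨heS, (G.mem_edgeSet.mp (hSG _ heS)).ne⟩)]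
      · rintro rfl
        exact ⟨((fromEdgeSet_adj _).mp hxy).1, Sym2.mem_mk_left _ _⟩
    simpa [hleaf] using heven x
  · obtain ⟨u, c, hc⟩ : ∃ (u : V) (c : H.Walk u u), c.IsCycle := by
      simpa [IsAcyclic] using hH
    refine ⟨u, c.mapLe hHG, hc.mapLe _, fun f hf => ?_⟩
    rw [List.mem_toFinset, Walk.edges_mapLe_eq_edges] at hf
    have hfH : f ∈ H.edgeSet := c.edges_subset_edgeSet hf
    exact (by simpa [H] using hfH : f ∈ S ∧ ¬f.IsDiag).1

theorem three_mul_egirth_le_two_mul_card_edges_union [DecidableEq V] [Finite V] {u v : V}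
    {C : G.Walk u u} {D : G.Walk v v} (hC : C.IsCycle) (hD : D.IsCycle) {e : Sym2 V}
    (heC : e ∈ C.edges) (heD : e ∉ D.edges) :
    3 * G.egirth ≤ 2 * #(C.edges.toFinset ∪ D.edges.toFinset) := by
  set A := C.edges.toFinset
  set B := D.edges.toFinset
  have hevenAB (x : V) : Even #{f ∈ A ∆ B | x ∈ f} := by
    have hfilter : {f ∈ A ∆ B | x ∈ f} = {f ∈ A | x ∈ f} ∆ {f ∈ B | x ∈ f} := by
      ext f
      simp only [mem_filter, mem_symmDiff]
      tauto
    have hA : Even #{f ∈ A | x ∈ f} := hC.even_card_filter_mem x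
    have hB : Even #{f ∈ B | x ∈ f} := hD.even_card_filter_mem x
    have := card_symmDiff_add_two_mul_card_inter {f ∈ A | x ∈ f} {f ∈ B | x ∈ f}
    rw [hfilter, Nat.even_iff] at *
    omega
  have hABG : ∀ f ∈ A ∆ B, f ∈ G.edgeSet := fun f hf => by
    rcases mem_symmDiff.mp hf with ⟨hf, -⟩ | ⟨hf, -⟩
    exacts [C.edges_subset_edgeSet (List.mem_toFinset.mp hf),
      D.edges_subset_edgeSet (List.mem_toFinset.mp hf)]
  have heAB : e ∈ A ∆ B :=
    mem_symmDiff.mpr (.inl ⟨List.mem_toFinset.mpr heC, by simpa [B] using heD⟩)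
  obtain ⟨w, c, hc, hcAB⟩ := exists_isCycle_edges_subset_of_even hABG ⟨e, heAB⟩ hevenAB
  have hsum : #A + #B + #(A ∆ B) = 2 * #(A ∪ B) := by
    have := card_symmDiff_add_two_mul_card_inter A B
    have := card_union_add_card_inter A B
    omega
  calc 3 * G.egirth = G.egirth + G.egirth + G.egirth := by ring
    _ ≤ #A + #B + #(A ∆ B) := by
      gcongr
      · exact (egirth_le_length hC).trans_eq (by rw [hC.isTrail.card_edges_toFinset])
      · exact (egirth_le_length hD).trans_eq (by rw [hD.isTrail.card_edges_toFinset])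
      · refine (egirth_le_length hc).trans ?_
        exact_mod_cast hc.isTrail.card_edges_toFinset ▸ card_le_card hcAB
    _ = 2 * #(A ∪ B) := by exact_mod_cast hsum

end SimpleGraph

theorem girth_le_of_genus_two_general
    {V : Type} [Fintype V] [DecidableEq V] (G : SimpleGraph V) [DecidableRel G.Adj]
    (hconn : G.Connected)
    (d : ℕ)
    (hd : Fintype.card V = d)
    (hm : G.edgeFinset.card = d + 1) :
    G.egirth ≤ ((2 * d - 1) / 3 + 1 : ℕ) := by
  have : Nonempty V := hconn.nonempty
  have hcard : Fintype.card V < #G.edgeFinset := by omega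
  obtain ⟨u, C, hC, hgirth⟩ := (exists_egirth_eq_length (G := G)).mpr fun hG => by
    have := hG.card_edgeFinset_lt
    omega
  obtain ⟨e, heC⟩ : ∃ e, e ∈ C.edges := List.exists_mem_of_length_pos <| by
    have := hC.three_le_length
    rw [Walk.length_edges]
    omega
  obtain ⟨v, D, hD, heD⟩ := exists_isCycle_notMem_edges hcard e
  have hunion : #(C.edges.toFinset ∪ D.edges.toFinset) ≤ d + 1 := by
    refine hm ▸ card_le_card fun f hf => ?_
    rcases mem_union.mp hf with hf | hf
    exacts [mem_edgeFinset.mpr (C.edges_subset_edgeSet (List.mem_toFinset.mp hf)),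
      mem_edgeFinset.mpr (D.edges_subset_edgeSet (List.mem_toFinset.mp hf))]
  have h3 := three_mul_egirth_le_two_mul_card_edges_union hC hD heC heD
  rw [hgirth] at h3 ⊢
  norm_cast at h3 ⊢
  omega

/-- Let `G` be a finite simple connected graph with `d` vertices and
`d + 1` edges (so `G` has genus `g = 2`) in which every vertex has degree at most 3.
Then the girth of `G` (the length of a shortest cycle, `∞` if acyclic) is at most
`⌊(2d − 1)/3⌋ + 1`. -/
theorem girth_le_of_genus_two
    {V : Type} [Fintype V] [DecidableEq V] (G : SimpleGraph V) [DecidableRel G.Adj]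
    (hconn : G.Connected)
    (hdeg : ∀ v : V, G.degree v ≤ 3)
    (d : ℕ)
    (hd : Fintype.card V = d)
    (hm : G.edgeFinset.card = d + 1) :
    G.egirth ≤ ((2 * d - 1) / 3 + 1 : ℕ) :=
  girth_le_of_genus_two_general G hconn d hd hm
end
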